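/- arXiv:2109.03361 — 3 statements merged into one kernel-verified Lean document; each statement's English description precedes it below -/
import Mathlib

section
/- Let $\theta>0$, $c>0$, $A>0$, and in the setting of the previous statement let $T_A=\inf\{n\ge1:R_n>A\}$ and $\tau_{A+c}=\inf\{t\ge0:Y_t>A+c\}$. Assuming $T_A<\infty$, one has $T_A=1+N_{\tau_{A+c}}$. -/
/-!
Write `S k = θ η k - c k` for the value of `X` at the `k`-th jump epoch and `M j = min_{k ≤ j} S k`.
Since `X` increases between jumps, on `[η j, η (j + 1))` the reflected process is
`Y t = θ t - c j - M j`, which increases towards `R (j + 1) + c` as `t ↑ η (j + 1)`, because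
`R (j + 1) = S (j + 1) - M j` is the largest suffix sum of the CUSUM increments. Hence `Y ≤ A + c`
before `η (T_A - 1)`, while `Y > A + c` somewhere in `[η (T_A - 1), η T_A)`; so the first passage
time lies in that interval and `N` equals `T_A - 1` there.
-/

open Finset

noncomputable def countingProcess (η : ℕ → ℝ) (t : ℝ) : ℕ := {k : ℕ | 1 ≤ k ∧ η k ≤ t}.ncard

noncomputable def driftJumpProcess (θ c : ℝ) (η : ℕ → ℝ) (t : ℝ) : ℝ :=
  θ * t - c * countingProcess η t

noncomputable def reflection (X : ℝ → ℝ) (t : ℝ) : ℝ := X t - min (sInf (X '' Set.Icc 0 t)) 0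

def runningMin {α : Type*} [LinearOrder α] (S : ℕ → α) (j : ℕ) : α :=
  (range (j + 1)).inf' nonempty_range_add_one S

section RunningMin

variable {α : Type*} [LinearOrder α]

theorem runningMin_le (S : ℕ → α) {j k : ℕ} (hk : k ≤ j) : runningMin S j ≤ S k :=
  inf'_le S (mem_range.2 (Nat.lt_succ_of_le hk))

theorem exists_runningMin_eq (S : ℕ → α) (j : ℕ) : ∃ k ≤ j, runningMin S j = S k := by
  obtain ⟨k, hk, h⟩ := exists_mem_eq_inf' nonempty_range_add_one S
  exact ⟨k, Nat.lt_succ_iff.1 (mem_range.1 hk), h⟩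

end RunningMin

section PartialSums

variable {M : Type*}

theorem sum_Icc_add_one_eq_sub [AddCommGroup M] (x : ℕ → M) {m n : ℕ} (hmn : m ≤ n) :
    ∑ i ∈ Icc (m + 1) n, x i = ∑ i ∈ Icc 1 n, x i - ∑ i ∈ Icc 1 m, x i := by
  have hIoc : ∀ k, Icc 1 k = Ioc 0 k := Icc_add_one_left_eq_Ioc 0
  rw [Icc_add_one_left_eq_Ioc, hIoc, hIoc, ← sum_Ioc_consecutive x m.zero_le hmn,
    add_sub_cancel_left]

theorem sup'_sum_Icc_eq_sub_runningMin [AddCommGroup M] [LinearOrder M] [IsOrderedAddMonoid M]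
    (x : ℕ → M) (n : ℕ) (h : (Icc 1 (n + 1)).Nonempty) :
    (Icc 1 (n + 1)).sup' h (fun k => ∑ i ∈ Icc k (n + 1), x i) =
      ∑ i ∈ Icc 1 (n + 1), x i - runningMin (fun m => ∑ i ∈ Icc 1 m, x i) n := by
  apply le_antisymm
  · refine sup'_le h _ fun k hk => ?_
    obtain ⟨m, rfl⟩ : ∃ m, k = m + 1 := ⟨k - 1, by grind⟩
    have hm : m ≤ n := by grind
    rw [sum_Icc_add_one_eq_sub x (hm.trans n.le_succ)]
    exact sub_le_sub_left (runningMin_le (fun m => ∑ i ∈ Icc 1 m, x i) hm) _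
  · obtain ⟨m, hm, hmin⟩ := exists_runningMin_eq (fun m => ∑ i ∈ Icc 1 m, x i) n
    rw [hmin, ← sum_Icc_add_one_eq_sub x (hm.trans n.le_succ)]
    exact le_sup' (fun k => ∑ i ∈ Icc k (n + 1), x i)
      (mem_Icc.2 ⟨Nat.le_add_left 1 m, Nat.succ_le_succ hm⟩)

theorem strictMono_sum_Icc_one [AddCommMonoid M] [PartialOrder M] [IsOrderedCancelAddMonoid M]
    {x : ℕ → M} (hx : ∀ i, 1 ≤ i → 0 < x i) : StrictMono fun n => ∑ i ∈ Icc 1 n, x i :=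
  strictMono_nat_of_lt_succ fun n => by
    simpa [sum_Icc_succ_top (Nat.le_add_left 1 n)] using hx (n + 1) (Nat.le_add_left 1 n)

end PartialSums

theorem exists_mem_Ico_of_mem_Ico {η : ℕ → ℝ} {m : ℕ} {t : ℝ} (ht : t ∈ Set.Ico (η 0) (η m)) :
    ∃ j < m, t ∈ Set.Ico (η j) (η (j + 1)) := by
  have := Ico_subset_biUnion_Ico m η ht
  simp only [Set.mem_iUnion, mem_range, exists_prop] at this
  exact this

theorem countingProcess_eq {η : ℕ → ℝ} (hη : StrictMono η) {j : ℕ} {t : ℝ}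
    (ht : t ∈ Set.Ico (η j) (η (j + 1))) : countingProcess η t = j := by
  have hcount : {k : ℕ | 1 ≤ k ∧ η k ≤ t} = Set.Icc 1 j := by
    ext k
    refine and_congr_right fun _ => ⟨fun hk => ?_, fun hk => (hη.monotone hk).trans ht.1⟩
    exact Nat.lt_succ_iff.1 (hη.lt_iff_lt.1 (hk.trans_lt ht.2))
  rw [countingProcess, hcount, ← coe_Icc, Set.ncard_coe_finset, Nat.card_Icc, Nat.add_sub_cancel]

section DriftJumpProcess

variable {η : ℕ → ℝ} {θ : ℝ} {j : ℕ} {t : ℝ}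

theorem sInf_driftJumpProcess_image_Icc (hη : StrictMono η) (hη0 : η 0 = 0) (hθ : 0 ≤ θ)
    (c : ℝ) (ht : t ∈ Set.Ico (η j) (η (j + 1))) :
    sInf (driftJumpProcess θ c η '' Set.Icc 0 t) = runningMin (fun k : ℕ => θ * η k - c * k) j := by
  refine IsLeast.csInf_eq ⟨?_, ?_⟩
  · obtain ⟨k, hk, hmin⟩ := exists_runningMin_eq (fun k : ℕ => θ * η k - c * k) j
    refine ⟨η k, ⟨hη0 ▸ hη.monotone k.zero_le, (hη.monotone hk).trans ht.1⟩, ?_⟩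
    rw [hmin, driftJumpProcess, countingProcess_eq hη ⟨le_rfl, hη k.lt_succ_self⟩]
  · rintro _ ⟨s, hs, rfl⟩
    obtain ⟨i, hi, hsi⟩ :=
      exists_mem_Ico_of_mem_Ico (m := j + 1) ⟨hη0 ▸ hs.1, hs.2.trans_lt ht.2⟩
    have hmin := runningMin_le (fun k : ℕ => θ * η k - c * k) (Nat.lt_succ_iff.1 hi)
    have hθs : θ * η i ≤ θ * s := mul_le_mul_of_nonneg_left hsi.1 hθ
    rw [driftJumpProcess, countingProcess_eq hη hsi]
    linarith

theorem reflection_driftJumpProcess_eq (hη : StrictMono η) (hη0 : η 0 = 0) (hθ : 0 ≤ θ)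
    (c : ℝ) (ht : t ∈ Set.Ico (η j) (η (j + 1))) :
    reflection (driftJumpProcess θ c η) t =
      θ * t - c * j - runningMin (fun k : ℕ => θ * η k - c * k) j := by
  have hmin_nonpos : runningMin (fun k : ℕ => θ * η k - c * k) j ≤ 0 := by
    simpa [hη0] using runningMin_le (fun k : ℕ => θ * η k - c * k) j.zero_le
  rw [reflection, sInf_driftJumpProcess_image_Icc hη hη0 hθ c ht, min_eq_left hmin_nonpos,
    driftJumpProcess, countingProcess_eq hη ht]

theorem reflection_driftJumpProcess_le (hη : StrictMono η) (hη0 : η 0 = 0) (hθ : 0 ≤ θ)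
    (c : ℝ) (ht : t ∈ Set.Ico (η j) (η (j + 1))) :
    reflection (driftJumpProcess θ c η) t ≤
      θ * η (j + 1) - c * j - runningMin (fun k : ℕ => θ * η k - c * k) j := by
  rw [reflection_driftJumpProcess_eq hη hη0 hθ c ht]
  gcongr
  exact ht.2.le

theorem exists_mem_Ico_lt_of_lt {β : Type*} [LinearOrder β] [TopologicalSpace β]
    [OrderClosedTopology β] {f : ℝ → β} {a : β} {u v : ℝ} (huv : u < v) (hf : ContinuousAt f v)
    (h : a < f v) : ∃ t ∈ Set.Ico u v, a < f t :=
  (Filter.Eventually.and (Ico_mem_nhdsLT huv)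
    ((hf.eventually (eventually_gt_nhds h)).filter_mono nhdsWithin_le_nhds)).exists

theorem exists_lt_reflection_driftJumpProcess (hη : StrictMono η) (hη0 : η 0 = 0) (hθ : 0 ≤ θ)
    (c : ℝ) {a : ℝ} (h : a < θ * η (j + 1) - c * j - runningMin (fun k : ℕ => θ * η k - c * k) j) :
    ∃ t ∈ Set.Ico (η j) (η (j + 1)), a < reflection (driftJumpProcess θ c η) t := by
  obtain ⟨t, ht, hlt⟩ := exists_mem_Ico_lt_of_lt (hη j.lt_succ_self)
    (continuous_const_mul θ).continuousAt
    (a := a + c * j + runningMin (fun k : ℕ => θ * η k - c * k) j) (by linarith)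
  exact ⟨t, ht, by rw [reflection_driftJumpProcess_eq hη hη0 hθ c ht]; linarith⟩

end DriftJumpProcess

theorem sInf_setOf_lt_mem_Ico {β : Type*} [LinearOrder β] {Y : ℝ → β} {a : β} {u v : ℝ}
    (hu : 0 ≤ u) (hbelow : ∀ t ∈ Set.Ico 0 u, Y t ≤ a) (habove : ∃ t ∈ Set.Ico u v, a < Y t) :
    sInf {t | 0 ≤ t ∧ a < Y t} ∈ Set.Ico u v := by
  obtain ⟨t₁, ht₁, hY₁⟩ := habove
  have hlower : u ∈ lowerBounds {t | 0 ≤ t ∧ a < Y t} := fun t ⟨h0, ht⟩ =>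
    not_lt.1 fun htu => (hbelow t ⟨h0, htu⟩).not_gt ht
  have hmem : t₁ ∈ {t | 0 ≤ t ∧ a < Y t} := ⟨hu.trans ht₁.1, hY₁⟩
  exact ⟨le_csInf ⟨t₁, hmem⟩ hlower, (csInf_le ⟨u, hlower⟩ hmem).trans_lt ht₁.2⟩

theorem alarm_time_eq_one_add_jumps_general (θ c A : ℝ) (hθ : 0 < θ)
    (ζ : ℕ → ℝ) (hζ : ∀ i, 1 ≤ i → 0 < ζ i)
    (η : ℕ → ℝ) (hη : ∀ n, η n = ∑ i ∈ Finset.Icc 1 n, ζ i)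
    (N : ℝ → ℕ) (hN : ∀ t, N t = Set.ncard {k : ℕ | 1 ≤ k ∧ η k ≤ t})
    (X : ℝ → ℝ) (hX : ∀ t, X t = θ * t - c * N t)
    (Y : ℝ → ℝ) (hY : ∀ t, Y t = X t - min (sInf (X '' Set.Icc 0 t)) 0)
    (R : ℕ → ℝ)
    (hR : ∀ n (hn : 1 ≤ n),
      R n = (Finset.Icc 1 n).sup' (Finset.nonempty_Icc.mpr hn)
        (fun k => ∑ i ∈ Finset.Icc k n, (θ * ζ i - c)))
    (hTfin : ∃ n, 1 ≤ n ∧ A < R n) :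
    sInf {n : ℕ | 1 ≤ n ∧ A < R n}
      = 1 + N (sInf {t : ℝ | 0 ≤ t ∧ A + c < Y t}) := by
  obtain rfl : N = countingProcess η := funext hN
  obtain rfl : X = driftJumpProcess θ c η := funext hX
  obtain rfl : Y = reflection (driftJumpProcess θ c η) := funext hY
  have hmono : StrictMono η := (funext hη : η = _) ▸ strictMono_sum_Icc_one hζ
  have hη0 : η 0 = 0 := by simp [hη]
  have hRc : ∀ n, R (n + 1) + c =
      θ * η (n + 1) - c * n - runningMin (fun k : ℕ => θ * η k - c * k) n := fun n => by
    rw [hR _ (Nat.le_add_left 1 n), sup'_sum_Icc_eq_sub_runningMin]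
    simp only [sum_sub_distrib, ← mul_sum, ← hη, sum_const, Nat.card_Icc, nsmul_eq_mul']
    push_cast
    ring
  obtain ⟨hT1, hTA⟩ := Nat.sInf_mem hTfin
  obtain ⟨p, hp⟩ : ∃ p, sInf {n : ℕ | 1 ≤ n ∧ A < R n} = p + 1 :=
    ⟨_, (Nat.sub_add_cancel hT1).symm⟩
  have hRle : ∀ j < p, R (j + 1) ≤ A := fun j hj => not_lt.1 fun h =>
    Nat.notMem_of_lt_sInf (s := {n : ℕ | 1 ≤ n ∧ A < R n}) (by omega) ⟨Nat.le_add_left 1 j, h⟩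
  have hτ : sInf {t | 0 ≤ t ∧ A + c < reflection (driftJumpProcess θ c η) t} ∈
      Set.Ico (η p) (η (p + 1)) := by
    refine sInf_setOf_lt_mem_Ico (hη0 ▸ hmono.monotone p.zero_le) (fun t ht => ?_) ?_
    · obtain ⟨j, hj, htj⟩ := exists_mem_Ico_of_mem_Ico (hη0.symm ▸ ht)
      exact (reflection_driftJumpProcess_le hmono hη0 hθ.le c htj).trans
        (hRc j ▸ add_le_add_left (hRle j hj) c)
    · exact exists_lt_reflection_driftJumpProcess hmono hη0 hθ.le c
        (hRc p ▸ add_lt_add_left (hp ▸ hTA) c)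
  rw [hp, countingProcess_eq hmono hτ, add_comm]

/-- the CUSUM alarm time equals one plus the number of jumps before the
reflected process first exceeds `A + c`: `T_A = 1 + N (τ_{A+c})`. -/
theorem alarm_time_eq_one_add_jumps (θ c A : ℝ) (hθ : 0 < θ) (hc : 0 < c) (hA : 0 < A)
    (ζ : ℕ → ℝ) (hζ : ∀ i, 1 ≤ i → 0 < ζ i)
    (η : ℕ → ℝ) (hη : ∀ n, η n = ∑ i ∈ Finset.Icc 1 n, ζ i)
    (N : ℝ → ℕ) (hN : ∀ t, N t = Set.ncard {k : ℕ | 1 ≤ k ∧ η k ≤ t})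
    (X : ℝ → ℝ) (hX : ∀ t, X t = θ * t - c * N t)
    (Y : ℝ → ℝ) (hY : ∀ t, Y t = X t - min (sInf (X '' Set.Icc 0 t)) 0)
    (R : ℕ → ℝ) (hR0 : R 0 = 0)
    (hR : ∀ n (hn : 1 ≤ n),
      R n = (Finset.Icc 1 n).sup' (Finset.nonempty_Icc.mpr hn)
        (fun k => ∑ i ∈ Finset.Icc k n, (θ * ζ i - c)))
    (hTfin : ∃ n, 1 ≤ n ∧ A < R n) :
    sInf {n : ℕ | 1 ≤ n ∧ A < R n}
      = 1 + N (sInf {t : ℝ | 0 ≤ t ∧ A + c < Y t}) :=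
  alarm_time_eq_one_add_jumps_general θ c A hθ ζ hζ η hη N hN X hX Y hY R hR hTfin
end

section
/- Let $T,B$ be $\mathfrak n\times\mathfrak n$ matrices, $\gamma>0$, $c>0$, and define $W(x)=\gamma^{-1}\sum_{k=1}^{\lfloor x/c\rfloor+1}e_{k1}^\top e^{T_k(c(k-1)-x)/\gamma}e_{kk}$ for $x\ge0$, where $T_k$ is the block bidiagonal matrix with $T$ on the diagonal blocks and $B$ on the superdiagonal blocks. Then $W$ is right-differentiable on $(0,\infty)$ with right derivative $W'_+(x)=-\gamma^{-2}\sum_{k=1}^{\lfloor x/c\rfloor+1}e_{k1}^\top T_k e^{T_k(c(k-1)-x)/\gamma}e_{kk}$. -/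
/-!
For `y ∈ [x, c(⌊x/c⌋ + 1))` the sum defining `W(y)` has the same `⌊x/c⌋ + 1` terms as `W(x)`,
so to the right of `x` the function `W` coincides with a fixed finite sum of corner blocks of
`e^{t T_k}`, `t = (ck - y)/γ`, and `d/dy e^{t T_k} = -γ⁻¹ T_k e^{t T_k}`.
-/

attribute [local instance] Matrix.normedAddCommGroup Matrix.normedSpace

/-- The block upper-bidiagonal matrix with `T` on the block diagonal and `B` on the first
block superdiagonal, with `k` diagonal blocks. -/
def blockBidiag {n : ℕ} (T B : Matrix (Fin n) (Fin n) ℝ) (k : ℕ) :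
    Matrix (Fin k × Fin n) (Fin k × Fin n) ℝ := fun p q =>
  if p.1 = q.1 then T p.2 q.2
  else if (q.1 : ℕ) = (p.1 : ℕ) + 1 then B p.2 q.2 else 0

/-- The scale matrix with deterministic jumps of size `c`:
`W(x) = γ⁻¹ ∑_{k=1}^{⌊x/c⌋+1} e_{k1}ᵀ e^{T_k (c(k-1)-x)/γ} e_{kk}` (here the index `k`
of the sum is shifted by one, so it runs over `0, …, ⌊x/c⌋`). -/
noncomputable def scaleW {n : ℕ} (T B : Matrix (Fin (n + 1)) (Fin (n + 1)) ℝ)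
    (γ c : ℝ) (x : ℝ) : Matrix (Fin (n + 1)) (Fin (n + 1)) ℝ :=
  γ⁻¹ • ∑ k ∈ Finset.range (Nat.floor (x / c) + 1),
    Matrix.of fun a b =>
      (NormedSpace.exp (((c * k - x) / γ) • blockBidiag T B (k + 1)))
        (0, a) (Fin.last k, b)

/-- The claimed right derivative
`W'_+(x) = -γ⁻² ∑_{k=1}^{⌊x/c⌋+1} e_{k1}ᵀ T_k e^{T_k (c(k-1)-x)/γ} e_{kk}`. -/
noncomputable def scaleW' {n : ℕ} (T B : Matrix (Fin (n + 1)) (Fin (n + 1)) ℝ)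
    (γ c : ℝ) (x : ℝ) : Matrix (Fin (n + 1)) (Fin (n + 1)) ℝ :=
  (-(γ ^ 2)⁻¹) • ∑ k ∈ Finset.range (Nat.floor (x / c) + 1),
    Matrix.of fun a b =>
      ((blockBidiag T B (k + 1)) *
        NormedSpace.exp (((c * k - x) / γ) • blockBidiag T B (k + 1)))
        (0, a) (Fin.last k, b)

open Filter Topology Set NormedSpace

theorem hasDerivAt_exp_smul_sub_div {𝕂 𝔸 : Type*} [RCLike 𝕂] [NormedRing 𝔸] [NormedAlgebra 𝕂 𝔸]
    [hA : CompleteSpace 𝔸] (A : 𝔸) (r γ x : 𝕂) :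
    HasDerivAt (fun y => exp (((r - y) / γ) • A)) (-γ⁻¹ • (A * exp (((r - x) / γ) • A))) x := by
  have hinner : HasDerivAt (fun y : 𝕂 => (r - y) / γ) (-γ⁻¹) x := by
    simpa [neg_div, one_div] using ((hasDerivAt_id x).const_sub r).div_const γ
  exact (hasDerivAt_exp_smul_const' A _).scomp x hinner

/-- Matrices carry no global normed-ring structure; the `L∞` operator norm supplies one inducing
the product topology, so the derivative it gives is the entrywise one. -/
theorem Matrix.hasDerivAt_exp_smul_sub_div {𝕂 m : Type*} [RCLike 𝕂] [Fintype m] [DecidableEq m]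
    (A : Matrix m m 𝕂) (r γ x : 𝕂) :
    HasDerivAt (fun y => exp (((r - y) / γ) • A)) (-γ⁻¹ • (A * exp (((r - x) / γ) • A))) x :=
  letI : NormedRing (Matrix m m 𝕂) := Matrix.linftyOpNormedRing
  letI : NormedAlgebra 𝕂 (Matrix m m 𝕂) := Matrix.linftyOpNormedAlgebra
  _root_.hasDerivAt_exp_smul_sub_div (hA := FiniteDimensional.complete 𝕂 _) A r γ x

theorem HasDerivAt.matrix_submatrix {𝕜 E l m n o : Type*} [NontriviallyNormedField 𝕜]
    [NormedAddCommGroup E] [NormedSpace 𝕜 E] [Fintype l] [Fintype m] [Fintype n] [Fintype o]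
    {f : 𝕜 → Matrix m n E} {f' : Matrix m n E} {x : 𝕜} (hf : HasDerivAt f f' x)
    (i : l → m) (j : o → n) :
    HasDerivAt (fun y => (f y).submatrix i j) (f'.submatrix i j) x :=
  hasDerivAt_pi.2 fun a => hasDerivAt_pi.2 fun b => hasDerivAt_pi.1 (hasDerivAt_pi.1 hf (i a)) (j b)

theorem eventually_floor_div_eq_nhdsGE {c : ℝ} (hc : 0 < c) (x : ℝ) :
    ∀ᶠ y in 𝓝[≥] x, ⌊y / c⌋₊ = ⌊x / c⌋₊ := by
  have hdiv : Tendsto (· / c) (𝓝[≥] x) (𝓝[≥] (x / c)) :=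
    tendsto_nhdsWithin_of_tendsto_nhds_of_eventually_within _
      ((continuous_id.div_const c).tendsto' x _ rfl |>.mono_left nhdsWithin_le_nhds)
      (eventually_nhdsWithin_of_forall fun y (hy : x ≤ y) => div_le_div_of_nonneg_right hy hc.le)
  filter_upwards [hdiv.eventually (tendsto_pure.1 (tendsto_floor_right_pure_floor (x / c)))]
    with y hy
  rw [← Int.floor_toNat, hy, Int.floor_toNat]

theorem HasDerivAt.hasDerivWithinAt_Ici_floor_div {E : Type*} [NormedAddCommGroup E]
    [NormedSpace ℝ E] {F : ℕ → ℝ → E} {F' : E} {c x : ℝ} (hc : 0 < c)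
    (h : HasDerivAt (F ⌊x / c⌋₊) F' x) :
    HasDerivWithinAt (fun y => F ⌊y / c⌋₊ y) F' (Ici x) x :=
  h.hasDerivWithinAt.congr_of_eventuallyEq
    ((eventually_floor_div_eq_nhdsGE hc x).mono fun y hy => by simp only [hy]) rfl

open Finset in
/-- `scaleW T B γ c x` is `scaleWTrunc T B γ c ⌊x / c⌋₊ x` by definition. -/
noncomputable def scaleWTrunc {n : ℕ} (T B : Matrix (Fin (n + 1)) (Fin (n + 1)) ℝ)
    (γ c : ℝ) (m : ℕ) (x : ℝ) : Matrix (Fin (n + 1)) (Fin (n + 1)) ℝ :=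
  γ⁻¹ • ∑ k ∈ range (m + 1),
    (exp (((c * k - x) / γ) • blockBidiag T B (k + 1))).submatrix (Prod.mk 0) (Prod.mk (Fin.last k))

open Finset in
theorem hasDerivAt_scaleWTrunc {n : ℕ} (T B : Matrix (Fin (n + 1)) (Fin (n + 1)) ℝ)
    (γ c : ℝ) (m : ℕ) (x : ℝ) :
    HasDerivAt (scaleWTrunc T B γ c m)
      ((-(γ ^ 2)⁻¹) • ∑ k ∈ range (m + 1),
        (blockBidiag T B (k + 1) * exp (((c * k - x) / γ) • blockBidiag T B (k + 1))).submatrix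
          (Prod.mk 0) (Prod.mk (Fin.last k))) x := by
  have hterm := fun k (_ : k ∈ range (m + 1)) =>
    (Matrix.hasDerivAt_exp_smul_sub_div (blockBidiag T B (k + 1)) (c * k) γ x).matrix_submatrix
      (Prod.mk 0) (Prod.mk (Fin.last k))
  refine ((HasDerivAt.fun_sum hterm).const_smul γ⁻¹).congr_deriv ?_
  simp only [Matrix.submatrix_smul, Pi.smul_apply, ← smul_sum, smul_smul]
  congr 1
  ring

theorem scaleW_hasRightDeriv_general {n : ℕ} (T B : Matrix (Fin (n + 1)) (Fin (n + 1)) ℝ)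
    (γ c : ℝ) (hc : 0 < c) :
    ∀ x : ℝ, 0 < x →
      HasDerivWithinAt (scaleW T B γ c) (scaleW' T B γ c x) (Set.Ici x) x := fun x _ =>
  (hasDerivAt_scaleWTrunc T B γ c ⌊x / c⌋₊ x).hasDerivWithinAt_Ici_floor_div hc

/-- the scale matrix with deterministic jumps is right-differentiable on
`(0,∞)` with right derivative `scaleW'`. -/
theorem scaleW_hasRightDeriv {n : ℕ} (T B : Matrix (Fin (n + 1)) (Fin (n + 1)) ℝ)
    (γ c : ℝ) (hγ : 0 < γ) (hc : 0 < c) :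
    ∀ x : ℝ, 0 < x →
      HasDerivWithinAt (scaleW T B γ c) (scaleW' T B γ c x) (Set.Ici x) x :=
  scaleW_hasRightDeriv_general T B γ c hc
end

section
/- In the setting of the previous statement, for $x\ge0$ and $T$ invertible on each block (i.e., each $T_k$ invertible), the integral $\overline W(x)=\int_0^xW(z)\,dz$ equals $\sum_{k=1}^{\lfloor x/c\rfloor+1}e_{k1}^\top T_k^{-1}\big(I_{\mathfrak nk}-e^{T_k(c(k-1)-x)/\gamma}\big)e_{kk}$. -/
/-! For `0 ≤ z ≤ x`, the `k`-th summand of `W(z)` is present exactly when `z ≥ c k`, so on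
`[0, x]` the function `W` is a fixed finite sum of the terms `γ⁻¹ e_{k1}ᵀ e^{T_k (c k - z)/γ} e_{kk}`
cut off below `c k`. Such a term has the antiderivative
`e_{k1}ᵀ T_k⁻¹ (I - e^{T_k (c k - z)/γ}) e_{kk}`, which vanishes at `z = c k`, so integrating term
by term gives the formula. -/

attribute [local instance] Matrix.normedAddCommGroup Matrix.normedSpace

open Set MeasureTheory NormedSpace

theorem IntervalIntegrable.indicator {E : Type*} [NormedAddCommGroup E] {f : ℝ → E} {μ : Measure ℝ}
    {a b : ℝ} (hf : IntervalIntegrable f μ a b) {s : Set ℝ} (hs : MeasurableSet s) :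
    IntervalIntegrable (s.indicator f) μ a b :=
  ⟨hf.1.indicator hs, hf.2.indicator hs⟩

theorem intervalIntegral.integral_indicator_Ici {E : Type*} [NormedAddCommGroup E]
    [NormedSpace ℝ E] {g : ℝ → E} {a b x : ℝ} (hab : a ≤ b) (hbx : b ≤ x)
    (hg : IntervalIntegrable g volume a x) :
    ∫ z in a..x, (Ici b).indicator g z = ∫ z in b..x, g z := by
  have hind := hg.indicator (measurableSet_Ici (a := b))
  have hleft : ∫ z in a..b, (Ici b).indicator g z = 0 := by
    refine intervalIntegral.integral_zero_ae ?_
    filter_upwards [Measure.ae_ne volume b] with z hzb hz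
    rw [uIoc_of_le hab] at hz
    exact indicator_of_notMem (fun h => hzb (le_antisymm hz.2 h)) g
  have hright : ∫ z in b..x, (Ici b).indicator g z = ∫ z in b..x, g z :=
    intervalIntegral.integral_congr fun z hz =>
      indicator_of_mem (show b ≤ z from (uIcc_of_le hbx ▸ hz).1) g
  have hb : b ∈ uIcc a x := by rw [uIcc_of_le (hab.trans hbx)]; exact ⟨hab, hbx⟩
  rw [← intervalIntegral.integral_add_adjacent_intervals
    (hind.mono_set (uIcc_subset_uIcc_left hb)) (hind.mono_set (uIcc_subset_uIcc_right hb)),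
    hleft, hright, zero_add]

theorem Finset.filter_range_floor_div_add_one {c z x : ℝ} (hc : 0 < c) (hz : 0 ≤ z)
    (hzx : z ≤ x) :
    (Finset.range (⌊x / c⌋₊ + 1)).filter (fun k : ℕ => c * k ≤ z) =
      Finset.range (⌊z / c⌋₊ + 1) := by
  ext k
  have hk : c * k ≤ z ↔ k ≤ ⌊z / c⌋₊ := by
    rw [Nat.le_floor_iff (div_nonneg hz hc.le), le_div_iff₀ hc, mul_comm]
  simp only [Finset.mem_filter, Finset.mem_range, Nat.lt_succ_iff, hk]
  exact ⟨And.right, fun h =>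
    ⟨h.trans (Nat.floor_le_floor (div_le_div_of_nonneg_right hzx hc.le)), h⟩⟩

section LinftyOpNorm

/- Calculus of the matrix exponential needs a normed algebra structure on matrices; the
statements below only involve real entries and the topology, so they hold for every norm. -/

attribute [-instance] Matrix.normedAddCommGroup Matrix.normedSpace
attribute [local instance] Matrix.linftyOpNormedRing Matrix.linftyOpNormedAlgebra

theorem Matrix.hasDerivAt_inv_mul_one_sub_exp_apply {ι : Type*} [Fintype ι] [DecidableEq ι]
    {A : Matrix ι ι ℝ} (hA : IsUnit A) (α γ z : ℝ) (i j : ι) :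
    HasDerivAt (fun z => (A⁻¹ * (1 - exp (((α - z) / γ) • A))) i j)
      (γ⁻¹ * exp (((α - z) / γ) • A) i j) z := by
  have hu : HasDerivAt (fun z => (α - z) / γ) (-γ⁻¹) z := by
    simpa [neg_div, one_div] using ((hasDerivAt_id z).const_sub α).div_const γ
  have hmat := (((hasDerivAt_exp_smul_const A ((α - z) / γ)).scomp z hu).const_sub 1).const_mul A⁻¹
  have hentry :=
    (Matrix.entryLinearMap ℝ ℝ i j).toContinuousLinearMap.hasFDerivAt.comp_hasDerivAt z hmat
  refine hentry.congr_deriv ?_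
  have hcomm : exp (((α - z) / γ) • A) * A = A * exp (((α - z) / γ) • A) :=
    ((Commute.refl A).smul_left _).exp_left
  change (A⁻¹ * -(-γ⁻¹ • (exp (((α - z) / γ) • A) * A))) i j = _
  rw [hcomm, neg_smul, neg_neg, Matrix.mul_smul, ← Matrix.mul_assoc,
    Matrix.nonsing_inv_mul _ ((Matrix.isUnit_iff_isUnit_det A).mp hA), Matrix.one_mul,
    Matrix.smul_apply, smul_eq_mul]

theorem Matrix.continuous_exp_smul {ι : Type*} [Fintype ι] [DecidableEq ι] (A : Matrix ι ι ℝ) :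
    Continuous fun u : ℝ => exp (u • A) :=
  continuous_iff_continuousAt.2 fun t => (hasDerivAt_exp_smul_const A t).continuousAt

end LinftyOpNorm

theorem Matrix.continuous_smul_exp_submatrix {ι κ κ' : Type*} [Fintype ι] [DecidableEq ι]
    (A : Matrix ι ι ℝ) (α γ : ℝ) (r : κ → ι) (s : κ' → ι) :
    Continuous fun z => γ⁻¹ • (exp (((α - z) / γ) • A)).submatrix r s :=
  ((A.continuous_exp_smul.comp (by fun_prop)).matrix_submatrix r s).const_smul γ⁻¹

theorem Matrix.hasDerivAt_submatrix_inv_mul_one_sub_exp {ι κ κ' : Type*} [Fintype ι]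
    [DecidableEq ι] [Fintype κ] [Fintype κ'] {A : Matrix ι ι ℝ} (hA : IsUnit A)
    (α γ z : ℝ) (r : κ → ι) (s : κ' → ι) :
    HasDerivAt (fun z => (A⁻¹ * (1 - exp (((α - z) / γ) • A))).submatrix r s)
      (γ⁻¹ • (exp (((α - z) / γ) • A)).submatrix r s) z :=
  hasDerivAt_pi.2 fun a => hasDerivAt_pi.2 fun b =>
    A.hasDerivAt_inv_mul_one_sub_exp_apply hA α γ z (r a) (s b)

theorem Matrix.integral_indicator_Ici_smul_exp_submatrix {ι κ κ' : Type*} [Fintype ι]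
    [DecidableEq ι] [Fintype κ] [Fintype κ'] {A : Matrix ι ι ℝ} (hA : IsUnit A) (γ : ℝ)
    {a x : ℝ} (ha : 0 ≤ a) (hax : a ≤ x) (r : κ → ι) (s : κ' → ι) :
    ∫ z in 0..x, (Ici a).indicator (fun z => γ⁻¹ • (exp (((a - z) / γ) • A)).submatrix r s) z
      = (A⁻¹ * (1 - exp (((a - x) / γ) • A))).submatrix r s := by
  have hcont := A.continuous_smul_exp_submatrix a γ r s
  rw [intervalIntegral.integral_indicator_Ici ha hax (hcont.intervalIntegrable _ _),
    intervalIntegral.integral_eq_sub_of_hasDerivAt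
      (fun z _ => hasDerivAt_submatrix_inv_mul_one_sub_exp hA a γ z r s)
      (hcont.intervalIntegrable _ _)]
  simp

/-- The paper's `e_{k1}ᵀ M e_{kk}`: the top-right block of a `(k + 1) × (k + 1)` block matrix. -/
def blockCorner {α : Type*} {k m : ℕ} (M : Matrix (Fin (k + 1) × Fin m) (Fin (k + 1) × Fin m) α) :
    Matrix (Fin m) (Fin m) α :=
  M.submatrix (Prod.mk 0) (Prod.mk (Fin.last k))

theorem scaleW_eq_sum_indicator {n : ℕ} (T B : Matrix (Fin (n + 1)) (Fin (n + 1)) ℝ)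
    (γ : ℝ) {c x z : ℝ} (hc : 0 < c) (hz : 0 ≤ z) (hzx : z ≤ x) :
    scaleW T B γ c z = ∑ k ∈ Finset.range (⌊x / c⌋₊ + 1), (Ici (c * k)).indicator
      (fun z => γ⁻¹ • blockCorner (exp (((c * k - z) / γ) • blockBidiag T B (k + 1)))) z := by
  rw [scaleW, ← Finset.filter_range_floor_div_add_one hc hz hzx, Finset.sum_filter,
    Finset.smul_sum]
  refine Finset.sum_congr rfl fun k _ => ?_
  simp only [indicator_apply, mem_Ici, smul_ite, smul_zero]
  rfl

theorem scaleW_integral_general {n : ℕ} (T B : Matrix (Fin (n + 1)) (Fin (n + 1)) ℝ)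
    (γ c : ℝ) (hc : 0 < c)
    (hinv : ∀ k : ℕ, IsUnit (blockBidiag T B (k + 1))) :
    ∀ x : ℝ, 0 ≤ x →
      (∫ z in (0 : ℝ)..x, scaleW T B γ c z)
        = ∑ k ∈ Finset.range (Nat.floor (x / c) + 1),
            Matrix.of fun a b =>
              ((blockBidiag T B (k + 1))⁻¹ *
                (1 - NormedSpace.exp (((c * k - x) / γ) • blockBidiag T B (k + 1))))
                (0, a) (Fin.last k, b) := by
  intro x hx
  have hkx : ∀ k ∈ Finset.range (⌊x / c⌋₊ + 1), c * k ≤ x := fun k hk =>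
    (le_div_iff₀' hc).1 ((Nat.le_floor_iff (by positivity)).1
      (Nat.lt_succ_iff.1 (Finset.mem_range.1 hk)))
  calc ∫ z in (0 : ℝ)..x, scaleW T B γ c z
      = ∫ z in (0 : ℝ)..x, ∑ k ∈ Finset.range (⌊x / c⌋₊ + 1), (Ici (c * k)).indicator
          (fun z => γ⁻¹ • blockCorner (exp (((c * k - z) / γ) • blockBidiag T B (k + 1)))) z :=
        intervalIntegral.integral_congr fun z hz => by
          rw [uIcc_of_le hx] at hz
          exact scaleW_eq_sum_indicator T B γ hc hz.1 hz.2
    _ = ∑ k ∈ Finset.range (⌊x / c⌋₊ + 1), ∫ z in (0 : ℝ)..x, (Ici (c * k)).indicator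
          (fun z => γ⁻¹ • blockCorner (exp (((c * k - z) / γ) • blockBidiag T B (k + 1)))) z :=
        intervalIntegral.integral_finsetSum fun k _ =>
          ((Matrix.continuous_smul_exp_submatrix _ _ _ _ _).intervalIntegrable _ _).indicator
            measurableSet_Ici
    _ = _ := Finset.sum_congr rfl fun k hk =>
        Matrix.integral_indicator_Ici_smul_exp_submatrix (hinv k) γ (by positivity) (hkx k hk) _ _

/-- the integrated scale matrix
`∫₀ˣ W(z) dz = ∑_{k=1}^{⌊x/c⌋+1} e_{k1}ᵀ T_k⁻¹ (I - e^{T_k(c(k-1)-x)/γ}) e_{kk}`,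
assuming each `T_k` is invertible. -/
theorem scaleW_integral {n : ℕ} (T B : Matrix (Fin (n + 1)) (Fin (n + 1)) ℝ)
    (γ c : ℝ) (hγ : 0 < γ) (hc : 0 < c)
    (hinv : ∀ k : ℕ, IsUnit (blockBidiag T B (k + 1))) :
    ∀ x : ℝ, 0 ≤ x →
      (∫ z in (0 : ℝ)..x, scaleW T B γ c z)
        = ∑ k ∈ Finset.range (Nat.floor (x / c) + 1),
            Matrix.of fun a b =>
              ((blockBidiag T B (k + 1))⁻¹ *
                (1 - NormedSpace.exp (((c * k - x) / γ) • blockBidiag T B (k + 1))))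
                (0, a) (Fin.last k, b) :=
  scaleW_integral_general T B γ c hc hinv
end
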